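/- Lipschitz bound for conjugation: for any unitaries U, V on a finite-dimensional Hilbert space H^S and any pure state Ψ^{SR} = |ψ⟩⟨ψ| on H^S ⊗ H^R, ‖UΨU† − VΨV†‖₁ ≤ 2·‖ψ^S‖_∞^{1/2}·‖U − V‖₂, where ψ^S = tr_R[Ψ^{SR}], ‖·‖₂ is the Hilbert-Schmidt norm, and the unitaries act as U⊗I on S⊗R. -/

import Mathlib

open scoped Matrix Kronecker ComplexOrder
open Matrix MeasureTheory

noncomputable section

/-- The square root of a positive semidefinite matrix (the definition `Matrix.PosSemidef.sqrt`
of the older Mathlib, removed since). -/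
def Matrix.PosSemidef.sqrt {n : Type*} [Fintype n] [DecidableEq n] {𝕜 : Type*} [RCLike 𝕜]
    {A : Matrix n n 𝕜} (hA : A.PosSemidef) : Matrix n n 𝕜 :=
  hA.1.eigenvectorUnitary.1 * diagonal (((↑) : ℝ → 𝕜) ∘ (√·) ∘ hA.1.eigenvalues) *
  (star hA.1.eigenvectorUnitary : Matrix n n 𝕜)

def traceNorm {n : Type*} [Fintype n] [DecidableEq n] (A : Matrix n n ℂ) : ℝ :=
  ((Matrix.posSemidef_conjTranspose_mul_self A).sqrt.trace).re

def IsDensity {n : Type*} [Fintype n] (ρ : Matrix n n ℂ) : Prop :=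
  ρ.PosSemidef ∧ ρ.trace = 1

def ptraceB {a b : Type*} [Fintype b] (M : Matrix (a × b) (a × b) ℂ) : Matrix a a ℂ :=
  Matrix.of fun i j => ∑ x : b, M (i, x) (j, x)

def ptraceA {a b : Type*} [Fintype a] (M : Matrix (a × b) (a × b) ℂ) : Matrix b b ℂ :=
  Matrix.of fun i j => ∑ x : a, M (x, i) (x, j)

def condMinEntropy {x c : Type*} [Fintype x] [DecidableEq x] [Fintype c] [DecidableEq c]
    (ρ : Matrix (x × c) (x × c) ℂ) : ℝ :=
  sSup {l : ℝ | ∃ σ : Matrix c c ℂ, IsDensity σ ∧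
    ((((2:ℝ) ^ (-l) : ℝ) : ℂ) • ((1 : Matrix x x ℂ) ⊗ₖ σ) - ρ).PosSemidef}

def outer {n : Type*} (v : n → ℂ) : Matrix n n ℂ :=
  Matrix.of fun i j => v i * star (v j)

/-- The operator (spectral) norm of a complex matrix, via its action on Euclidean space. -/
def opNorm {n : Type*} [Fintype n] [DecidableEq n] (A : Matrix n n ℂ) : ℝ :=
  ‖LinearMap.toContinuousLinearMap (Matrix.toEuclideanLin A)‖

/-- The Hilbert-Schmidt norm of a matrix. -/
def hsNorm {m n : Type*} [Fintype m] [Fintype n] (A : Matrix m n ℂ) : ℝ :=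
  Real.sqrt (((Aᴴ * A).trace).re)

lemma Matrix.PosSemidef.eq_sqrt_of_sq_eq {n : Type*} [Fintype n] [DecidableEq n]
    {A : Matrix n n ℂ} (hA : A.PosSemidef) (B : Matrix n n ℂ) {hB : B.PosSemidef}
    (h : A ^ 2 = B) : A = hB.sqrt := by
  have e : hB.sqrt = cfc Real.sqrt B := by
    rw [hB.1.cfc_eq]
    simp [IsHermitian.cfc, Matrix.PosSemidef.sqrt, Function.comp_def]
  rw [e]
  subst h
  have hsa : IsSelfAdjoint A := hA.1
  rw [← cfc_comp_pow (R := ℝ) Real.sqrt 2 A]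
  have hs : ∀ x ∈ spectrum ℝ A, Real.sqrt (x ^ 2) = id x := by
    intro x hx
    rw [hA.1.spectrum_real_eq_range_eigenvalues] at hx
    obtain ⟨i, rfl⟩ := hx
    exact Real.sqrt_sq (hA.eigenvalues_nonneg i)
  rw [cfc_congr hs, cfc_id ℝ A]

namespace TNAux

set_option linter.unusedSectionVars false

variable {n : Type*} [Fintype n] [DecidableEq n]

def K (x y : n → ℂ) : Matrix n n ℂ := Matrix.of fun i j => x i * star (y j)

def ip (x y : n → ℂ) : ℂ := ∑ i, star (x i) * y i

lemma outer_eq_K (v : n → ℂ) : outer v = K v v := rfl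

lemma K_mul_K (x y z w : n → ℂ) : K x y * K z w = ip y z • K x w := by
  ext i j
  simp only [K, ip, Matrix.mul_apply, Matrix.smul_apply, Matrix.of_apply, smul_eq_mul,
    Finset.sum_mul]
  exact Finset.sum_congr rfl fun k _ => by ring

lemma trace_K (x y : n → ℂ) : (K x y).trace = ip y x := by
  simp only [K, ip, Matrix.trace, Matrix.diag, Matrix.of_apply]
  exact Finset.sum_congr rfl fun k _ => by ring

lemma K_conjTranspose (x y : n → ℂ) : (K x y)ᴴ = K y x := by
  ext i j
  simp [K, mul_comm]

lemma mul_K (W : Matrix n n ℂ) (x y : n → ℂ) : W * K x y = K (W *ᵥ x) y := by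
  ext i j
  simp only [K, Matrix.mul_apply, Matrix.of_apply, Matrix.mulVec, dotProduct,
    Finset.sum_mul]
  exact Finset.sum_congr rfl fun k _ => by ring

lemma K_mul_conjT (W : Matrix n n ℂ) (x y : n → ℂ) : K x y * Wᴴ = K x (W *ᵥ y) := by
  ext i j
  simp only [K, Matrix.mul_apply, Matrix.conjTranspose_apply, Matrix.of_apply,
    Matrix.mulVec, dotProduct, star_sum, Finset.mul_sum, star_mul']
  exact Finset.sum_congr rfl fun k _ => by ring

lemma mul_K_mul (W W' : Matrix n n ℂ) (x y : n → ℂ) :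
    W * K x y * W'ᴴ = K (W *ᵥ x) (W' *ᵥ y) := by
  rw [mul_K, K_mul_conjT]

lemma ip_star_comm (x y : n → ℂ) : star (ip x y) = ip y x := by
  simp only [ip, star_sum, star_mul', star_star]
  exact Finset.sum_congr rfl fun k _ => by ring

lemma traceNorm_K_sub_K_le (a b : n → ℂ) (ha : ip a a = 1) (hb : ip b b = 1) :
    traceNorm (K a a - K b b) ≤ 2 * Real.sqrt ((ip (a - b) (a - b)).re) := by
  set D := K a a - K b b with hDdef
  have hD : Dᴴ = D := by
    rw [hDdef, Matrix.conjTranspose_sub, K_conjTranspose, K_conjTranspose]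
  set c := ip a b with hc
  have hba : ip b a = star c := (ip_star_comm a b).symm
  have hM : D * D = K a a + K b b - c • K a b - star c • K b a := by
    rw [hDdef]
    simp only [sub_mul, mul_sub, K_mul_K, ha, hb, ← hc, hba, one_smul]
    module
  have hM2 : (D * D) * (D * D) = ((1 : ℂ) - c * star c) • (D * D) := by
    rw [hM]
    simp only [sub_mul, mul_sub, add_mul, mul_add, smul_mul_assoc, mul_smul_comm, K_mul_K,
      ha, hb, ← hc, hba, one_smul, smul_smul, smul_sub, smul_add]
    module
  have hDD : (D * D).PosSemidef := by
    have h := Matrix.posSemidef_conjTranspose_mul_self D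
    rwa [hD] at h
  have htr : (D * D).trace = 2 - 2 * (c * star c) := by
    rw [hM]
    simp only [Matrix.trace_sub, Matrix.trace_add, Matrix.trace_smul, trace_K, ha, hb, ← hc,
      hba, smul_eq_mul]
    ring
  set μ : ℝ := 1 - Complex.normSq c with hμdef
  have hccμ : (1 : ℂ) - c * star c = ((μ : ℝ) : ℂ) := by
    rw [hμdef, Complex.star_def, Complex.mul_conj]
    push_cast
    ring
  have htrμ : (D * D).trace = ((2 * μ : ℝ) : ℂ) := by
    rw [htr]
    push_cast
    push_cast at hccμ
    linear_combination 2 * hccμ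
  have htrre : 0 ≤ ((D * D).trace).re := by
    have heq : (D * D).trace = (Dᴴ * D).trace := by rw [hD]
    rw [heq]
    simp only [Matrix.trace, Matrix.diag, Matrix.mul_apply, Matrix.conjTranspose_apply,
      Complex.re_sum]
    refine Finset.sum_nonneg fun j _ => ?_
    refine Finset.sum_nonneg fun i _ => ?_
    simpa [Complex.mul_conj, Complex.normSq_apply] using Complex.normSq_nonneg (D i j)
  have hμ0 : 0 ≤ μ := by
    rw [htrμ] at htrre
    simp only [Complex.ofReal_re] at htrre
    linarith
  by_cases hμz : μ = 0
  · have h4 : (D * D) * (D * D) = 0 := by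
      rw [hM2, hccμ, hμz]
      simp
    have hDD0 : D * D = 0 := by
      have h : (D * D)ᴴ * (D * D) = 0 := by
        rw [Matrix.conjTranspose_mul, hD]
        exact h4
      exact Matrix.conjTranspose_mul_self_eq_zero.mp h
    have hD0 : D = 0 := Matrix.conjTranspose_mul_self_eq_zero.mp (by rw [hD]; exact hDD0)
    rw [hD0]
    have h0 : traceNorm (0 : Matrix n n ℂ) = 0 := by
      unfold traceNorm
      have hz : (0 : Matrix n n ℂ) =
          (Matrix.posSemidef_conjTranspose_mul_self (0 : Matrix n n ℂ)).sqrt :=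
        Matrix.PosSemidef.eq_sqrt_of_sq_eq Matrix.PosSemidef.zero _ (by simp)
      rw [← hz]
      simp
    rw [h0]
    positivity
  · have hμpos : 0 < μ := hμ0.lt_of_ne (Ne.symm hμz)
    set t : ℝ := (Real.sqrt μ)⁻¹ with ht
    have htpos : 0 < t := by positivity
    set S : Matrix n n ℂ := ((t : ℝ) : ℂ) • (D * D) with hS
    have hSpsd : S.PosSemidef := by
      constructor
      · show Sᴴ = S
        rw [hS, Matrix.conjTranspose_smul, hDD.1.eq]
        congr 1
        simp [Complex.star_def, Complex.conj_ofReal]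
      · exact (hDD.smul (a := ((t : ℝ) : ℂ)) (Complex.zero_le_real.mpr htpos.le)).2
    have hcoef : ((t : ℝ) : ℂ) * ((t : ℝ) : ℂ) * ((μ : ℝ) : ℂ) = 1 := by
      have : (t * t * μ : ℝ) = 1 := by
        rw [ht]
        rw [← mul_inv]
        rw [Real.mul_self_sqrt hμ0]
        field_simp
      push_cast at this ⊢
      exact_mod_cast this
    have hS2 : S ^ 2 = Dᴴ * D := by
      rw [pow_two, hS, Matrix.smul_mul, Matrix.mul_smul, smul_smul, hM2, hccμ, smul_smul,
        hcoef, one_smul, hD]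
    have hsq : S = (Matrix.posSemidef_conjTranspose_mul_self D).sqrt :=
      hSpsd.eq_sqrt_of_sq_eq _ hS2
    have hTN : traceNorm D = 2 * Real.sqrt μ := by
      unfold traceNorm
      rw [← hsq, hS, Matrix.trace_smul, htrμ, smul_eq_mul, ← Complex.ofReal_mul,
        Complex.ofReal_re, ht]
      rw [eq_comm, mul_comm (Real.sqrt μ)⁻¹]
      rw [mul_comm 2 (Real.sqrt μ)]
      field_simp
      nlinarith [Real.mul_self_sqrt hμ0]
    rw [hTN]
    have hip : ip (a - b) (a - b) = 2 - c - star c := by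
      have expand : ∀ i, star ((a - b) i) * ((a - b) i) =
          star (a i) * a i - star (a i) * b i - (star (b i) * a i - star (b i) * b i) := by
        intro i
        simp only [Pi.sub_apply, star_sub]
        ring
      calc ip (a - b) (a - b)
          = ∑ i, (star (a i) * a i - star (a i) * b i -
              (star (b i) * a i - star (b i) * b i)) :=
            Finset.sum_congr rfl fun i _ => expand i
        _ = ip a a - ip a b - (ip b a - ip b b) := by
            rw [Finset.sum_sub_distrib, Finset.sum_sub_distrib, Finset.sum_sub_distrib]
            rfl
        _ = 2 - c - star c := by rw [ha, hb, ← hc, hba]; ring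
    have hle : μ ≤ (ip (a - b) (a - b)).re := by
      rw [hip]
      simp only [Complex.sub_re, Complex.re_ofNat, Complex.star_def, Complex.conj_re]
      rw [hμdef, Complex.normSq_apply]
      nlinarith [sq_nonneg (c.re - 1), sq_nonneg c.im]
    have hs := Real.sqrt_le_sqrt hle
    linarith



lemma ip_eq_dot (x y : n → ℂ) : ip x y = star x ⬝ᵥ y := rfl

lemma ip_mulVec_mulVec (W : Matrix n n ℂ) (x y : n → ℂ) :
    ip (W *ᵥ x) (W *ᵥ y) = ip x ((Wᴴ * W) *ᵥ y) := by
  rw [ip_eq_dot, ip_eq_dot, Matrix.star_mulVec, Matrix.dotProduct_mulVec,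
    Matrix.vecMul_vecMul, ← Matrix.dotProduct_mulVec]

lemma trace_mul_K (A : Matrix n n ℂ) (x y : n → ℂ) :
    (A * K x y).trace = ip y (A *ᵥ x) := by
  simp only [Matrix.trace, Matrix.diag, Matrix.mul_apply, K, Matrix.of_apply, ip,
    Matrix.mulVec, dotProduct, Finset.mul_sum, Finset.sum_mul]
  refine Finset.sum_congr rfl fun p _ => Finset.sum_congr rfl fun q _ => by ring

set_option maxHeartbeats 2000000 in
lemma ip_mulVec_le (ρ : Matrix n n ℂ) (u : n → ℂ) :
    (ip u (ρ *ᵥ u)).re ≤ opNorm ρ * ∑ j, ‖u j‖ ^ 2 := by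
  set u' : EuclideanSpace ℂ n := (WithLp.equiv 2 (n → ℂ)).symm u with hu'
  have hipeq : ip u (ρ *ᵥ u) = inner ℂ u' (Matrix.toEuclideanLin ρ u') := by
    rw [hu', WithLp.equiv_symm_apply, Matrix.toEuclideanLin_apply_piLp_toLp]
    simp [ip, PiLp.inner_apply, RCLike.inner_apply, mul_comm]
  have h1 : (ip u (ρ *ᵥ u)).re ≤ ‖(inner ℂ u' (Matrix.toEuclideanLin ρ u') : ℂ)‖ := by
    rw [hipeq]
    exact Complex.re_le_norm _
  have h2 : ‖(inner ℂ u' (Matrix.toEuclideanLin ρ u') : ℂ)‖ ≤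
      ‖u'‖ * ‖Matrix.toEuclideanLin ρ u'‖ := norm_inner_le_norm (𝕜 := ℂ) _ _
  have h3 : ‖Matrix.toEuclideanLin ρ u'‖ ≤ opNorm ρ * ‖u'‖ := by
    have h := (LinearMap.toContinuousLinearMap (Matrix.toEuclideanLin ρ)).le_opNorm u'
    rw [LinearMap.coe_toContinuousLinearMap'] at h
    exact h
  have h4 : ‖u'‖ ^ 2 = ∑ j, ‖u j‖ ^ 2 := by
    have hnn : (0:ℝ) ≤ ∑ j, ‖u' j‖ ^ 2 := by positivity
    rw [EuclideanSpace.norm_eq, Real.sq_sqrt hnn]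
    rw [hu']
    exact Finset.sum_congr rfl fun j _ => by rw [WithLp.equiv_symm_apply, PiLp.toLp_apply]
  have h0 : 0 ≤ ‖u'‖ := norm_nonneg _
  have h5 : 0 ≤ opNorm ρ := norm_nonneg _
  calc (ip u (ρ *ᵥ u)).re ≤ ‖u'‖ * ‖Matrix.toEuclideanLin ρ u'‖ := h1.trans h2
    _ ≤ ‖u'‖ * (opNorm ρ * ‖u'‖) := by nlinarith
    _ = opNorm ρ * ‖u'‖ ^ 2 := by ring
    _ = opNorm ρ * ∑ j, ‖u j‖ ^ 2 := by rw [h4]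

lemma diag_mul_mul_conjT (M ρ : Matrix n n ℂ) (i : n) :
    (M * ρ * Mᴴ) i i = ip (fun j => star (M i j)) (ρ *ᵥ fun j => star (M i j)) := by
  simp only [Matrix.mul_apply, Matrix.conjTranspose_apply, ip, Matrix.mulVec,
    dotProduct, star_star, Finset.sum_mul, Finset.mul_sum]
  rw [Finset.sum_comm]
  refine Finset.sum_congr rfl fun j _ => Finset.sum_congr rfl fun k _ => by ring

lemma hsNorm_sq (M : Matrix n n ℂ) : hsNorm M ^ 2 = ∑ i, ∑ j, ‖M i j‖ ^ 2 := by
  have htr : ((Mᴴ * M).trace).re = ∑ j, ∑ i, ‖M i j‖ ^ 2 := by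
    simp only [Matrix.trace, Matrix.diag, Matrix.mul_apply, Matrix.conjTranspose_apply,
      Complex.re_sum]
    refine Finset.sum_congr rfl fun j _ => Finset.sum_congr rfl fun i _ => ?_
    simp [Complex.mul_conj, Complex.normSq_apply, Complex.sq_norm,
      ← Complex.normSq_eq_norm_sq, Complex.normSq_apply]
  rw [hsNorm, Real.sq_sqrt (by rw [htr]; positivity), htr, Finset.sum_comm]


section Kron

variable {s r : Type*} [Fintype s] [DecidableEq s] [Fintype r] [DecidableEq r]

lemma kron_one_conjT (M : Matrix s s ℂ) :
    (M ⊗ₖ (1 : Matrix r r ℂ))ᴴ = Mᴴ ⊗ₖ (1 : Matrix r r ℂ) := by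
  ext ⟨i, x⟩ ⟨j, y⟩
  by_cases hxy : x = y
  · subst hxy
    simp [Matrix.conjTranspose_apply, Matrix.kroneckerMap_apply, Matrix.one_apply]
  · simp [Matrix.conjTranspose_apply, Matrix.kroneckerMap_apply, Matrix.one_apply, hxy,
      Ne.symm hxy]

lemma sub_kron_one (U V : Matrix s s ℂ) :
    (U - V) ⊗ₖ (1 : Matrix r r ℂ) = U ⊗ₖ (1 : Matrix r r ℂ) - V ⊗ₖ (1 : Matrix r r ℂ) := by
  ext ⟨i, x⟩ ⟨j, y⟩
  simp [Matrix.kroneckerMap_apply, Matrix.sub_apply, sub_mul]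

lemma trace_kron_one_mul (B : Matrix s s ℂ) (Ψ : Matrix (s × r) (s × r) ℂ) :
    ((B ⊗ₖ (1 : Matrix r r ℂ)) * Ψ).trace = (B * ptraceB Ψ).trace := by
  simp only [Matrix.trace, Matrix.diag, Matrix.mul_apply, Fintype.sum_prod_type, ptraceB,
    Matrix.kroneckerMap_apply, Matrix.one_apply, Matrix.of_apply, mul_ite, mul_one, mul_zero,
    ite_mul, one_mul, zero_mul, Finset.sum_ite_eq, Finset.sum_ite_eq', Finset.mem_univ,
    if_true, Finset.mul_sum]
  refine Finset.sum_congr rfl fun i _ => ?_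
  rw [Finset.sum_comm]

end Kron

end TNAux

open TNAux in
/-- Lipschitz bound for conjugation: for unitaries `U, V` on `S` and a pure state
`Ψ` on `S ⊗ R`, `‖UΨU† − VΨV†‖₁ ≤ 2·‖ψ^S‖_∞^{1/2}·‖U − V‖₂`. -/
theorem traceNorm_conj_lipschitz
    {s r : Type*} [Fintype s] [DecidableEq s] [Fintype r] [DecidableEq r]
    (U V : Matrix s s ℂ)
    (hU : U ∈ Matrix.unitaryGroup s ℂ) (hV : V ∈ Matrix.unitaryGroup s ℂ)
    (ψ : s × r → ℂ) (hψ : ∑ i, ‖ψ i‖ ^ 2 = 1) :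
    traceNorm ((U ⊗ₖ (1 : Matrix r r ℂ)) * outer ψ * (U ⊗ₖ (1 : Matrix r r ℂ))ᴴ -
        (V ⊗ₖ (1 : Matrix r r ℂ)) * outer ψ * (V ⊗ₖ (1 : Matrix r r ℂ))ᴴ) ≤
      2 * Real.sqrt (opNorm (ptraceB (outer ψ))) * hsNorm (U - V) := by
  classical
  set a := (U ⊗ₖ (1 : Matrix r r ℂ)) *ᵥ ψ with hadef
  set b := (V ⊗ₖ (1 : Matrix r r ℂ)) *ᵥ ψ with hbdef
  set ρ := ptraceB (outer ψ) with hρdef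
  have hψ1 : ip ψ ψ = 1 := by
    have hterm : ∀ i, star (ψ i) * ψ i = ((‖ψ i‖ ^ 2 : ℝ) : ℂ) := fun i => by
      rw [Complex.star_def, mul_comm, Complex.mul_conj]
      norm_cast
      simp [Complex.normSq_eq_norm_sq]
    rw [ip, Finset.sum_congr rfl fun i _ => hterm i, ← Complex.ofReal_sum, hψ]
    norm_num
  have hWW : ∀ X : Matrix s s ℂ, X ∈ Matrix.unitaryGroup s ℂ →
      (X ⊗ₖ (1 : Matrix r r ℂ))ᴴ * (X ⊗ₖ (1 : Matrix r r ℂ)) = 1 := by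
    intro X hX
    rw [kron_one_conjT, ← Matrix.mul_kronecker_mul, Matrix.one_mul]
    have h1 : Xᴴ * X = 1 := by
      have h := Matrix.mem_unitaryGroup_iff'.mp hX
      simpa [Matrix.star_eq_conjTranspose] using h
    rw [h1, Matrix.one_kronecker_one]
  have ha : ip a a = 1 := by
    rw [hadef, ip_mulVec_mulVec, hWW U hU, Matrix.one_mulVec]
    exact hψ1
  have hb : ip b b = 1 := by
    rw [hbdef, ip_mulVec_mulVec, hWW V hV, Matrix.one_mulVec]
    exact hψ1
  have hgoal : (U ⊗ₖ (1 : Matrix r r ℂ)) * outer ψ * (U ⊗ₖ (1 : Matrix r r ℂ))ᴴ -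
      (V ⊗ₖ (1 : Matrix r r ℂ)) * outer ψ * (V ⊗ₖ (1 : Matrix r r ℂ))ᴴ = K a a - K b b := by
    rw [outer_eq_K, mul_K_mul, mul_K_mul]
  rw [hgoal]
  refine le_trans (traceNorm_K_sub_K_le a b ha hb) ?_
  have hab : a - b = ((U - V) ⊗ₖ (1 : Matrix r r ℂ)) *ᵥ ψ := by
    rw [sub_kron_one, Matrix.sub_mulVec]
  have key : (ip (a - b) (a - b)).re ≤ opNorm ρ * hsNorm (U - V) ^ 2 := by
    set M := U - V with hMdef
    have e1 : ip (a - b) (a - b) = ((Mᴴ * M) * ρ).trace := by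
      rw [hab, ip_mulVec_mulVec, kron_one_conjT, ← Matrix.mul_kronecker_mul, Matrix.one_mul]
      rw [← trace_mul_K, ← outer_eq_K, trace_kron_one_mul]
    have e2 : ((Mᴴ * M) * ρ).trace = (M * ρ * Mᴴ).trace := by
      rw [Matrix.mul_assoc, Matrix.trace_mul_comm]
    rw [e1, e2, Matrix.trace, Complex.re_sum]
    have hbnd : ∀ i, ((M * ρ * Mᴴ).diag i).re ≤ opNorm ρ * ∑ j, ‖M i j‖ ^ 2 := by
      intro i
      have h := ip_mulVec_le ρ (fun j => star (M i j))
      rw [Matrix.diag, diag_mul_mul_conjT]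
      simpa [norm_star] using h
    calc ∑ i, ((M * ρ * Mᴴ).diag i).re
        ≤ ∑ i, opNorm ρ * ∑ j, ‖M i j‖ ^ 2 := Finset.sum_le_sum fun i _ => hbnd i
      _ = opNorm ρ * ∑ i, ∑ j, ‖M i j‖ ^ 2 := by rw [Finset.mul_sum]
      _ = opNorm ρ * hsNorm M ^ 2 := by rw [hsNorm_sq]
  have hs : Real.sqrt ((ip (a - b) (a - b)).re) ≤ Real.sqrt (opNorm ρ) * hsNorm (U - V) := by
    have h0 : 0 ≤ opNorm ρ := norm_nonneg _
    have hhs : 0 ≤ hsNorm (U - V) := Real.sqrt_nonneg _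
    have h := Real.sqrt_le_sqrt key
    rwa [Real.sqrt_mul h0, Real.sqrt_sq hhs] at h
  linarith
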